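/- For every β > 0 and every x ∈ [0,1], there exists a unique y ∈ (0,1) satisfying tanh(βxy) = 1 - 2y. Moreover, the resulting function h(x) = y satisfies h(0) = 1/2, is decreasing, and h'(x) = -β h(x)/(βx + 2cosh²(βx h(x))) ≥ -β/2 for all x ∈ [0,1]. -/

import Mathlib

/-!
Existence and uniqueness: `y ↦ tanh (β x y) + 2 y` is continuous and strictly increasing, with
values `0` at `0` and `> 1` at `1`.

For two solutions `(x₁, y₁)`, `(x₂, y₂)` put `aᵢ = β xᵢ yᵢ` and let `p = dslope tanh a₁ a₂` be the
secant slope of `tanh`, which lies in `(0, 1]` by the mean value theorem. Then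
`-2 (y₂ - y₁) = tanh a₂ - tanh a₁ = p (a₂ - a₁)` rearranges to
`(y₂ - y₁) (2 + β x₂ p) = -β y₁ p (x₂ - x₁)`.
This identity shows that the solution is antitone and `β/2`-Lipschitz in `x`. Dividing it by
`x₂ - x₁` and letting `x₂ → x₁`, so that `p → tanh' a₁ = 1 / cosh² a₁`, gives the derivative.
-/

open Real Set Filter Topology

namespace Real

theorem hasDerivAt_tanh (x : ℝ) : HasDerivAt tanh (1 / cosh x ^ 2) x := by
  rw [show tanh = sinh / cosh from funext tanh_eq_sinh_div_cosh]
  refine ((hasDerivAt_sinh x).div (hasDerivAt_cosh x) (cosh_pos x).ne').congr_deriv ?_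
  rw [← cosh_sq_sub_sinh_sq x]
  ring

theorem differentiable_tanh : Differentiable ℝ tanh :=
  fun x => (hasDerivAt_tanh x).differentiableAt

theorem deriv_tanh (x : ℝ) : deriv tanh x = 1 / cosh x ^ 2 := (hasDerivAt_tanh x).deriv

@[fun_prop]
theorem continuous_tanh : Continuous tanh := differentiable_tanh.continuous

theorem tanh_strictMono : StrictMono tanh :=
  strictMono_of_deriv_pos fun x => by rw [deriv_tanh]; positivity

theorem exists_dslope_tanh_eq (a b : ℝ) : ∃ c, dslope tanh a b = 1 / cosh c ^ 2 := by
  rcases lt_trichotomy a b with hab | rfl | hab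
  · obtain ⟨c, -, hc⟩ := exists_deriv_eq_slope' tanh hab continuous_tanh.continuousOn
      differentiable_tanh.differentiableOn
    exact ⟨c, by rw [dslope_of_ne _ hab.ne', ← hc, deriv_tanh]⟩
  · exact ⟨a, by rw [dslope_same, deriv_tanh]⟩
  · obtain ⟨c, -, hc⟩ := exists_deriv_eq_slope' tanh hab continuous_tanh.continuousOn
      differentiable_tanh.differentiableOn
    exact ⟨c, by rw [dslope_of_ne _ hab.ne, slope_comm, ← hc, deriv_tanh]⟩

theorem dslope_tanh_mem_Ioc (a b : ℝ) : dslope tanh a b ∈ Ioc 0 1 := by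
  obtain ⟨c, hc⟩ := exists_dslope_tanh_eq a b
  have : 1 ≤ cosh c ^ 2 := one_le_pow₀ (one_le_cosh c)
  rw [hc]
  exact ⟨by positivity, (div_le_one (by positivity)).2 this⟩

end Real

theorem existsUnique_tanh_mul_eq_one_sub_two_mul {c : ℝ} (hc : 0 ≤ c) :
    ∃! y : ℝ, y ∈ Ioo (0 : ℝ) 1 ∧ tanh (c * y) = 1 - 2 * y := by
  set f : ℝ → ℝ := fun y => tanh (c * y) + 2 * y
  have hf_mono : StrictMono f := fun y₁ y₂ hy => by
    have : tanh (c * y₁) ≤ tanh (c * y₂) :=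
      tanh_strictMono.monotone (mul_le_mul_of_nonneg_left hy.le hc)
    simp only [f]
    linarith
  have hf_cont : Continuous f := by fun_prop
  have hf_one : 1 < f 1 := by
    simp only [f]
    linarith [neg_one_lt_tanh (c * 1)]
  obtain ⟨y, hy, hfy⟩ : 1 ∈ f '' Ioo 0 1 :=
    intermediate_value_Ioo zero_le_one hf_cont.continuousOn ⟨by simp [f], hf_one⟩
  refine ⟨y, ⟨hy, by simp only [f] at hfy; linarith⟩, fun z ⟨_, hz⟩ => hf_mono.injective ?_⟩
  simp only [f] at hfy ⊢
  linarith

theorem mem_Ioo_of_tanh_eq_one_sub_two_mul {a y : ℝ} (h : tanh a = 1 - 2 * y) :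
    y ∈ Ioo (0 : ℝ) 1 :=
  ⟨by linarith [tanh_lt_one a], by linarith [neg_one_lt_tanh a]⟩

section Solutions

variable {β x₁ x₂ y₁ y₂ : ℝ}

theorem sub_mul_eq_of_tanh_eq (e₁ : tanh (β * x₁ * y₁) = 1 - 2 * y₁)
    (e₂ : tanh (β * x₂ * y₂) = 1 - 2 * y₂) :
    (y₂ - y₁) * (2 + β * x₂ * dslope tanh (β * x₁ * y₁) (β * x₂ * y₂)) =
      -(β * y₁ * dslope tanh (β * x₁ * y₁) (β * x₂ * y₂)) * (x₂ - x₁) := by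
  have := sub_smul_dslope tanh (β * x₁ * y₁) (β * x₂ * y₂)
  rw [smul_eq_mul, e₁, e₂] at this
  linear_combination this

theorem le_of_tanh_eq (hβ : 0 ≤ β) (hx₁ : 0 ≤ x₁) (hx : x₁ ≤ x₂)
    (e₁ : tanh (β * x₁ * y₁) = 1 - 2 * y₁) (e₂ : tanh (β * x₂ * y₂) = 1 - 2 * y₂) :
    y₂ ≤ y₁ := by
  have hp := dslope_tanh_mem_Ioc (β * x₁ * y₁) (β * x₂ * y₂)
  have hy₁ := mem_Ioo_of_tanh_eq_one_sub_two_mul e₁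
  have key := sub_mul_eq_of_tanh_eq e₁ e₂
  nlinarith [mul_nonneg (mul_nonneg hβ (hx₁.trans hx)) hp.1.le,
    mul_nonneg (mul_nonneg (mul_nonneg hβ hy₁.1.le) hp.1.le) (sub_nonneg.2 hx)]

theorem abs_sub_le_of_tanh_eq (hβ : 0 ≤ β) (hx₂ : 0 ≤ x₂)
    (e₁ : tanh (β * x₁ * y₁) = 1 - 2 * y₁) (e₂ : tanh (β * x₂ * y₂) = 1 - 2 * y₂) :
    |y₂ - y₁| ≤ β / 2 * |x₂ - x₁| := by
  set p := dslope tanh (β * x₁ * y₁) (β * x₂ * y₂)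
  have hp : p ∈ Ioc 0 1 := dslope_tanh_mem_Ioc _ _
  have hy₁ := mem_Ioo_of_tanh_eq_one_sub_two_mul e₁
  have key := congrArg abs (sub_mul_eq_of_tanh_eq e₁ e₂)
  have hβp : β * y₁ * p ≤ β := by
    nlinarith [mul_le_mul hy₁.2.le hp.2 hp.1.le zero_le_one]
  have hβxp : 0 ≤ β * x₂ * p := mul_nonneg (mul_nonneg hβ hx₂) hp.1.le
  rw [abs_mul, abs_mul, abs_neg, abs_of_pos (by linarith : 0 < 2 + β * x₂ * p),
    abs_of_nonneg (mul_nonneg (mul_nonneg hβ hy₁.1.le) hp.1.le)] at key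
  nlinarith [mul_nonneg (abs_nonneg (y₂ - y₁)) hβxp,
    mul_le_mul_of_nonneg_right hβp (abs_nonneg (x₂ - x₁))]

end Solutions

section ImplicitFunction

variable {β : ℝ} {h : ℝ → ℝ} {s : Set ℝ}

theorem continuousOn_of_tanh_eq (hβ : 0 ≤ β) (hs : s ⊆ Ici 0)
    (hh : ∀ x ∈ s, tanh (β * x * h x) = 1 - 2 * h x) : ContinuousOn h s := by
  refine (LipschitzOnWith.of_dist_le_mul (K := toNNReal (β / 2))
    fun x hx x' hx' => ?_).continuousOn
  rw [dist_eq, dist_eq, coe_toNNReal _ (by positivity)]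
  exact abs_sub_le_of_tanh_eq hβ (hs hx) (hh x' hx') (hh x hx)

theorem hasDerivWithinAt_of_tanh_eq (hβ : 0 ≤ β) (hs : s ⊆ Ici 0)
    (hh : ∀ x ∈ s, tanh (β * x * h x) = 1 - 2 * h x) {x : ℝ} (hx : x ∈ s) :
    HasDerivWithinAt h (-(β * h x) / (β * x + 2 * cosh (β * x * h x) ^ 2)) s x := by
  set a := β * x * h x
  set p : ℝ → ℝ := fun x' => dslope tanh a (β * x' * h x')
  have hp : Tendsto p (𝓝[s \ {x}] x) (𝓝 (1 / cosh a ^ 2)) := by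
    have hdslope := (continuousAt_dslope_same.2 (differentiable_tanh a)).tendsto
    rw [dslope_same, deriv_tanh] at hdslope
    refine hdslope.comp ?_
    exact (((continuousWithinAt_id.const_mul β).mul
      ((continuousOn_of_tanh_eq hβ hs hh) x hx)).mono sdiff_subset).tendsto
  have hslope :
      ∀ x' ∈ s \ {x}, -(β * h x * p x') / (2 + β * x' * p x') = slope h x x' := by
    rintro x' ⟨hx's, hx'x⟩
    have hp' : 0 ≤ β * x' * p x' :=
      mul_nonneg (mul_nonneg hβ (hs hx's)) (dslope_tanh_mem_Ioc _ _).1.le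
    rw [slope_def_field, div_eq_div_iff (by linarith) (sub_ne_zero.2 hx'x)]
    exact (sub_mul_eq_of_tanh_eq (hh x hx) (hh x' hx's)).symm
  have hx' : Tendsto (fun x' => x') (𝓝[s \ {x}] x) (𝓝 x) :=
    tendsto_nhdsWithin_of_tendsto_nhds tendsto_id
  have hden : 2 + β * x * (1 / cosh a ^ 2) ≠ 0 := by
    have := mul_nonneg (mul_nonneg hβ (hs hx)) (by positivity : 0 ≤ 1 / cosh a ^ 2)
    linarith
  have hlim : Tendsto (fun x' => -(β * h x * p x') / (2 + β * x' * p x')) (𝓝[s \ {x}] x)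
      (𝓝 (-(β * h x * (1 / cosh a ^ 2)) / (2 + β * x * (1 / cosh a ^ 2)))) :=
    (tendsto_const_nhds.mul hp).neg.div
      (tendsto_const_nhds.add ((hx'.const_mul β).mul hp)) hden
  have hval : -(β * h x) / (β * x + 2 * cosh a ^ 2) =
      -(β * h x * (1 / cosh a ^ 2)) / (2 + β * x * (1 / cosh a ^ 2)) := by
    field_simp
    ring
  rw [hasDerivWithinAt_iff_tendsto_slope, hval]
  exact hlim.congr' (eventually_nhdsWithin_of_forall hslope)

end ImplicitFunction

theorem neg_div_two_le_neg_mul_div_add_two_mul_cosh_sq {β x y a : ℝ} (hβ : 0 ≤ β)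
    (hx : 0 ≤ x) (hy : y ≤ 1) : -β / 2 ≤ -(β * y) / (β * x + 2 * cosh a ^ 2) := by
  have hcosh : 1 ≤ cosh a ^ 2 := one_le_pow₀ (one_le_cosh a)
  have hβx : 0 ≤ β * x := mul_nonneg hβ hx
  rw [neg_div, neg_div, neg_le_neg_iff, div_le_div_iff₀ (by linarith) two_pos]
  nlinarith [mul_le_mul_of_nonneg_left hy hβ, mul_le_mul_of_nonneg_left hcosh hβ]

theorem stmt_13 (β : ℝ) (hβ : 0 < β) :
    (∀ x ∈ Set.Icc (0 : ℝ) 1,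
      ∃! y : ℝ, y ∈ Set.Ioo (0 : ℝ) 1 ∧ Real.tanh (β * x * y) = 1 - 2 * y) ∧
    (∀ h : ℝ → ℝ,
      (∀ x ∈ Set.Icc (0 : ℝ) 1,
        h x ∈ Set.Ioo (0 : ℝ) 1 ∧ Real.tanh (β * x * h x) = 1 - 2 * h x) →
      h 0 = 1 / 2 ∧ AntitoneOn h (Set.Icc 0 1) ∧
      ∀ x ∈ Set.Icc (0 : ℝ) 1,
        HasDerivWithinAt h
          (-(β * h x) / (β * x + 2 * Real.cosh (β * x * h x) ^ 2)) (Set.Icc 0 1) x ∧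
        -(β * h x) / (β * x + 2 * Real.cosh (β * x * h x) ^ 2) ≥ -β / 2) := by
  refine ⟨fun x hx => existsUnique_tanh_mul_eq_one_sub_two_mul (mul_nonneg hβ.le hx.1),
    fun h hh => ?_⟩
  have hsol : ∀ x ∈ Icc (0 : ℝ) 1, tanh (β * x * h x) = 1 - 2 * h x :=
    fun x hx => (hh x hx).2
  have h_zero : h 0 = 1 / 2 := by
    have := hsol 0 ⟨le_rfl, zero_le_one⟩
    rw [mul_zero, zero_mul, tanh_zero] at this
    linarith
  refine ⟨h_zero,
    fun x₁ hx₁ x₂ hx₂ hle => le_of_tanh_eq hβ.le hx₁.1 hle (hsol x₁ hx₁) (hsol x₂ hx₂),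
    fun x hx => ⟨hasDerivWithinAt_of_tanh_eq hβ.le (fun _ hx => hx.1) hsol hx, ?_⟩⟩
  exact neg_div_two_le_neg_mul_div_add_two_mul_cosh_sq hβ.le hx.1 (hh x hx).1.2.le
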